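/- arXiv:1606.08872 — 2 statements merged into one kernel-verified Lean document; each statement's English description precedes it below -/
import Mathlib

section
/- Let 1 ≤ i ≤ j ≤ r, and for each i ≤ t ≤ j let k_t be an integer with 1 ≤ k_t ≤ t + 1; let π_{k_t} denote the cycle with ambient index t. If, for some 1 ≤ l ≤ r, π_{k_j}(α_l) is a negative root, then π_{k_i} π_{k_{i+1}} ⋯ π_{k_j}(α_l) is a negative root. -/
open Equiv Finset

/-- The simple reflection `s i = (i, i+1)` (1-based) in `S_{r+1}`, for `1 ≤ i ≤ r`;
the junk value `1` otherwise. -/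
def sr (r i : ℕ) : Equiv.Perm (Fin (r + 1)) :=
  if h : 1 ≤ i ∧ i ≤ r then Equiv.swap ⟨i - 1, by omega⟩ ⟨i, by omega⟩ else 1

/-- The cycle `π_k` with ambient index `i`, i.e. `s_i s_{i-1} ⋯ s_k`
(the identity when `k = i + 1`). -/
def cyc (r i k : ℕ) : Equiv.Perm (Fin (r + 1)) :=
  ((List.range (i + 1 - k)).map fun t => sr r (i - t)).prod

/-- The product `π_{k i} π_{k (i+1)} ⋯ π_{k j}`, the factor `π_{k t}` being the
cycle with ambient index `t`. -/
def cycProd (r : ℕ) (k : ℕ → ℕ) (i j : ℕ) : Equiv.Perm (Fin (r + 1)) :=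
  ((List.range' i (j + 1 - i)).map fun t => cyc r t (k t)).prod

/-- Coxeter length of a permutation: the number of inversions. -/
def lenInv {n : ℕ} (w : Equiv.Perm (Fin n)) : ℕ :=
  (Finset.univ.filter fun p : Fin n × Fin n => p.1 < p.2 ∧ w p.2 < w p.1).card

/-- Partial sums of a (1-based) composition: `psum c j = c 1 + ⋯ + c j`. -/
def psum (c : ℕ → ℕ) (j : ℕ) : ℕ := ∑ i ∈ Finset.Icc 1 j, c i

/-- The transpose partition of `(t 1, …, t b)`: `transp b t j = #{i ∈ [1,b] : t i ≥ j}`. -/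
def transp (b : ℕ) (t : ℕ → ℕ) (j : ℕ) : ℕ :=
  ((Finset.Icc 1 b).filter fun i => j ≤ t i).card

/-- The element of `Fin (r+1)` with value `i` (for `i ≤ r`). -/
def finOf (r i : ℕ) : Fin (r + 1) := ⟨min i r, by omega⟩

/-- `w(α_i)` is a positive root, where `α_i = e_i − e_{i+1}` (1-based), i.e. the
0-based pair `(i-1, i)`; `w(e_c − e_d) = e_{w c} − e_{w d}` is positive iff `w c < w d`. -/
def posRoot (r : ℕ) (w : Equiv.Perm (Fin (r + 1))) (i : ℕ) : Prop :=
  (w (finOf r (i - 1)) : ℕ) < w (finOf r i)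

/-- `w(α_i)` is a negative root. -/
def negRoot (r : ℕ) (w : Equiv.Perm (Fin (r + 1))) (i : ℕ) : Prop :=
  (w (finOf r i) : ℕ) < w (finOf r (i - 1))

/-- `w(α_i)` is a simple root. -/
def simpleRoot (r : ℕ) (w : Equiv.Perm (Fin (r + 1))) (i : ℕ) : Prop :=
  (w (finOf r i) : ℕ) = (w (finOf r (i - 1)) : ℕ) + 1

/-- `w(α_i) = α_j` (as roots: the image pair is `(j-1, j)` in 0-based indices). -/
def eqRoot (r : ℕ) (w : Equiv.Perm (Fin (r + 1))) (i j : ℕ) : Prop :=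
  (w (finOf r (i - 1)) : ℕ) = j - 1 ∧ (w (finOf r i) : ℕ) = j

/-- `Π_l Π_{l+1} ⋯ Π_a` for the composition `c` and tuple `k`, where
`Π_j = π_{k_{x_{j-1}}} ⋯ π_{k_{x_j - 1}}` and `x_j = psum c j`. -/
def tailProd (r a : ℕ) (c k : ℕ → ℕ) (l : ℕ) : Equiv.Perm (Fin (r + 1)) :=
  ((List.range' l (a + 1 - l)).map fun j => cycProd r k (psum c (j - 1)) (psum c j - 1)).prod

/-- The subgroup `W(P)`: generated by the simple reflections `s i` with `i ∈ [1,r]`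
avoiding the partial sums `x 1, …, x (a-1)` of the composition `c`. -/
def WP (r a : ℕ) (c : ℕ → ℕ) : Subgroup (Equiv.Perm (Fin (r + 1))) :=
  Subgroup.closure
    {g | ∃ i, 1 ≤ i ∧ i ≤ r ∧ (∀ j, 1 ≤ j → j ≤ a - 1 → i ≠ psum c j) ∧ g = sr r i}

/-- `α_i ∈ Δ_λ` for the composition `λ = (p 1, …, p m)` of `r+1`. -/
def inDelta (r m : ℕ) (p : ℕ → ℕ) (i : ℕ) : Prop :=
  1 ≤ i ∧ i ≤ r ∧ ∀ j, 1 ≤ j → j ≤ m - 1 → i ≠ psum p j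

/-- The left coset `H · g`. -/
def cosetOf {G : Type*} [Group G] (H : Subgroup G) (g : G) : Set G :=
  {x | ∃ h ∈ H, x = h * g}

/-- The (0-based) positions `u` and `v` lie in the same block of the composition
`μ^⊤ = transp b t`; a negative root `e_c − e_d` lies in `Φ⁻_{μ^⊤}` iff its two
indices lie in the same block. -/
def sameBlock (b : ℕ) (t : ℕ → ℕ) (u v : ℕ) : Prop :=
  ∃ j, 1 ≤ j ∧ j ≤ t 1 ∧
    psum (transp b t) (j - 1) ≤ u ∧ u < psum (transp b t) j ∧
    psum (transp b t) (j - 1) ≤ v ∧ v < psum (transp b t) j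

/-!
On 0-based positions, `π_k` (ambient index `t`) sends `k - 1 ↦ t`, shifts `k, …, t` down by one
and fixes everything else. Hence `π_k(α_l)` is negative exactly when `l = k ≤ t`, and then
`π_k(α_l) = e_t − e_{l-1}`. Every earlier factor `π_{k_s}`, `s < j`, fixes the position `j` and
maps `{0, …, j - 1}` into itself, so the whole product sends `α_l` to `e_j − e_c` with `c < j`.
-/

lemma Equiv.Perm.list_prod_mapsTo {α : Type*} {L : List (Perm α)} {s : Set α}
    (h : ∀ σ ∈ L, Set.MapsTo σ s s) : Set.MapsTo L.prod s s := by
  induction L with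
  | nil => exact Set.mapsTo_id s
  | cons σ L ih =>
    rw [List.prod_cons, Perm.coe_mul]
    exact (h σ List.mem_cons_self).comp (ih fun τ hτ => h τ (List.mem_cons_of_mem σ hτ))

lemma val_finOf {r i : ℕ} (h : i ≤ r) : (finOf r i : ℕ) = i := min_eq_left h

lemma sr_apply_val {r i : ℕ} (h1 : 1 ≤ i) (h2 : i ≤ r) (x : Fin (r + 1)) :
    (sr r i x : ℕ) = if (x : ℕ) = i - 1 then i else if (x : ℕ) = i then i - 1 else x := by
  rw [sr, dif_pos ⟨h1, h2⟩, swap_apply_def]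
  split_ifs <;> simp only [Fin.ext_iff] at * <;> omega

lemma cyc_eq_cyc_succ_mul {r i k : ℕ} (h : k ≤ i) : cyc r i k = cyc r i (k + 1) * sr r k := by
  rw [cyc, cyc, show i + 1 - k = i + 1 - (k + 1) + 1 by omega, List.range_succ, List.map_append,
    List.prod_append, List.map_singleton, List.prod_singleton,
    show i - (i + 1 - (k + 1)) = k by omega]

lemma cyc_apply_val {r i k : ℕ} (hir : i ≤ r) (hk : 1 ≤ k) (x : Fin (r + 1)) :
    (cyc r i k x : ℕ) =
      if (x : ℕ) + 1 < k ∨ i < (x : ℕ) then (x : ℕ)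
      else if (x : ℕ) + 1 = k then i else (x : ℕ) - 1 := by
  induction hn : i + 1 - k generalizing k x with
  | zero =>
    simp only [cyc, hn, List.range_zero, List.map_nil, List.prod_nil, Perm.one_apply]
    split_ifs <;> omega
  | succ n ih =>
    rw [cyc_eq_cyc_succ_mul (by omega), Perm.mul_apply, ih (by omega) _ (by omega),
      sr_apply_val hk (by omega)]
    split_ifs <;> omega

section cyc

variable {r t k : ℕ}

lemma negRoot_cyc_iff (ht : t ≤ r) (hk : 1 ≤ k) {l : ℕ} (hl : 1 ≤ l) (hlr : l ≤ r) :
    negRoot r (cyc r t k) l ↔ k = l ∧ l ≤ t := by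
  rw [negRoot, cyc_apply_val ht hk, cyc_apply_val ht hk, val_finOf hlr, val_finOf (by omega)]
  split_ifs <;> omega

lemma cyc_apply_finOf_pred (ht : t ≤ r) (hk : 1 ≤ k) (hkt : k ≤ t) :
    cyc r t k (finOf r (k - 1)) = finOf r t := by
  ext
  rw [cyc_apply_val ht hk, val_finOf (by omega), val_finOf ht]
  split_ifs <;> omega

lemma cyc_apply_finOf_self (ht : t ≤ r) (hk : 1 ≤ k) (hkt : k ≤ t) :
    cyc r t k (finOf r k) = finOf r (k - 1) := by
  ext
  rw [cyc_apply_val ht hk, val_finOf (by omega), val_finOf (by omega)]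
  split_ifs <;> omega

lemma cyc_mapsTo_Iic (ht : t ≤ r) (hk : 1 ≤ k) {M : ℕ} (htM : t ≤ M) :
    Set.MapsTo (cyc r t k) {x | (x : ℕ) ≤ M} {x | (x : ℕ) ≤ M} := by
  intro x (hx : (x : ℕ) ≤ M)
  change (cyc r t k x : ℕ) ≤ M
  rw [cyc_apply_val ht hk]
  split_ifs <;> omega

lemma cyc_mapsTo_singleton (ht : t ≤ r) (hk : 1 ≤ k) {x : Fin (r + 1)} (hx : t < x) :
    Set.MapsTo (cyc r t k) {x} {x} := by
  rw [Set.mapsTo_singleton, Set.mem_singleton_iff, Fin.ext_iff, cyc_apply_val ht hk]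
  split_ifs <;> omega

end cyc

section cycProd

variable {r : ℕ} {k : ℕ → ℕ} {i j : ℕ}

lemma cycProd_succ (hij : i ≤ j + 1) :
    cycProd r k i (j + 1) = cycProd r k i j * cyc r (j + 1) (k (j + 1)) := by
  rw [cycProd, cycProd, show j + 1 + 1 - i = j + 1 - i + 1 by omega, List.range'_concat,
    List.map_append, List.prod_append, show i + 1 * (j + 1 - i) = j + 1 by omega]
  simp

lemma cycProd_mapsTo {s : Set (Fin (r + 1))}
    (hs : ∀ t, i ≤ t → t ≤ j → Set.MapsTo (cyc r t (k t)) s s) :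
    Set.MapsTo (cycProd r k i j) s s := by
  refine Perm.list_prod_mapsTo fun σ hσ => ?_
  obtain ⟨t, ht, rfl⟩ := List.mem_map.1 hσ
  rw [List.mem_range'_1] at ht
  exact hs t (by omega) (by omega)

lemma cycProd_apply_of_lt (hk : ∀ t, i ≤ t → t ≤ j → 1 ≤ k t)
    {x : Fin (r + 1)} (hx : j < x) : cycProd r k i j x = x :=
  cycProd_mapsTo (fun t hit htj => cyc_mapsTo_singleton (by omega) (hk t hit htj) (by omega))
    (Set.mem_singleton x)

lemma cycProd_apply_val_le (hj : j ≤ r) (hk : ∀ t, i ≤ t → t ≤ j → 1 ≤ k t)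
    {x : Fin (r + 1)} (hx : (x : ℕ) ≤ j) : (cycProd r k i j x : ℕ) ≤ j :=
  cycProd_mapsTo (fun t hit htj => cyc_mapsTo_Iic (by omega) (hk t hit htj) htj) hx

end cycProd

theorem stmt9_general (r i j l : ℕ) (hij : i ≤ j) (hjr : j ≤ r)
    (hl1 : 1 ≤ l) (hlr : l ≤ r) (k : ℕ → ℕ)
    (hk : ∀ t, i ≤ t → t ≤ j → 1 ≤ k t ∧ k t ≤ t + 1)
    (hneg : negRoot r (cyc r j (k j)) l) :
    negRoot r (cycProd r k i j) l := by
  have hkj : 1 ≤ k j := (hk j hij le_rfl).1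
  obtain ⟨hkl, hlj⟩ := (negRoot_cyc_iff hjr hkj hl1 hlr).1 hneg
  obtain ⟨j, rfl⟩ : ∃ j', j = j' + 1 := ⟨j - 1, by omega⟩
  have hk' : ∀ t, i ≤ t → t ≤ j → 1 ≤ k t := fun t hit htj => (hk t hit (by omega)).1
  have hfix : cycProd r k i j (finOf r (j + 1)) = finOf r (j + 1) :=
    cycProd_apply_of_lt hk' (by rw [val_finOf hjr]; omega)
  have hle : (cycProd r k i j (finOf r (l - 1)) : ℕ) ≤ j :=
    cycProd_apply_val_le (by omega) hk' (by rw [val_finOf (by omega)]; omega)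
  rw [negRoot, cycProd_succ hij, Perm.mul_apply, Perm.mul_apply, ← hkl,
    cyc_apply_finOf_pred hjr hkj (by omega), cyc_apply_finOf_self hjr hkj (by omega), hfix,
    val_finOf hjr, hkl]
  omega

/-- if `π_{k_j}(α_l)` is a negative root, so is
`π_{k_i} π_{k_{i+1}} ⋯ π_{k_j}(α_l)`. -/
theorem stmt9 (r i j l : ℕ) (hi : 1 ≤ i) (hij : i ≤ j) (hjr : j ≤ r)
    (hl1 : 1 ≤ l) (hlr : l ≤ r) (k : ℕ → ℕ)
    (hk : ∀ t, i ≤ t → t ≤ j → 1 ≤ k t ∧ k t ≤ t + 1)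
    (hneg : negRoot r (cyc r j (k j)) l) :
    negRoot r (cycProd r k i j) l :=
  stmt9_general r i j l hij hjr hl1 hlr k hk hneg
end

section
/- Let μ = (t_1, …, t_b) be a partition of r+1 with t_1 ≥ ⋯ ≥ t_b > 0, with transpose μ^⊤ = (r_1, …, r_a), and let λ = (p_1, …, p_m) be a composition of r+1. If there exists an index l with 1 ≤ l ≤ m such that p_1 + ⋯ + p_l > t_1 + ⋯ + t_l (where t_i := 0 for i > b), then for every w ∈ [W(P_{μ^⊤})\W(G)] there exists α ∈ Δ_λ such that w(α) is a positive root. -/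
/-!
Suppose no simple root of `Δ_λ` is sent to a positive root. Then `w` is decreasing on every block
of `λ`, while minimality of `w` in its coset `W(P_{μ^⊤}) w` makes `w⁻¹` increasing on every block
of `μ^⊤`. Hence no two positions of one block of `λ` are sent into one block of `μ^⊤`, so the first
`l` blocks of `λ` meet the `k`-th block of `μ^⊤` in at most `min(l, r_k)` points, and
`p_1 + ⋯ + p_l ≤ ∑_k min(l, r_k) = t_1 + ⋯ + t_{min(l,b)} ≤ t_1 + ⋯ + t_l`.
-/

open Equiv Finset

lemma psum_monotone (c : ℕ → ℕ) : Monotone (psum c) := fun _ _ h =>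
  sum_le_sum_of_subset (Icc_subset_Icc_right h)

lemma psum_eq_sum_range (c : ℕ → ℕ) (j : ℕ) : psum c j = ∑ k ∈ range j, c (k + 1) := by
  rw [psum, ← Finset.Ico_add_one_right_eq_Icc, sum_Ico_eq_sum_range]
  simp [add_comm]

@[simp]
lemma psum_zero (c : ℕ → ℕ) : psum c 0 = 0 := by simp [psum]

lemma psum_succ (c : ℕ → ℕ) (k : ℕ) : psum c (k + 1) = psum c k + c (k + 1) := by
  simp [psum_eq_sum_range, sum_range_succ]

lemma exists_mem_block {x : ℕ → ℕ} (hx0 : x 0 = 0) {a v : ℕ} (hv : v < x a) :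
    ∃ k < a, x k ≤ v ∧ v < x (k + 1) := by
  classical
  have hex : ∃ k, v < x k := ⟨a, hv⟩
  obtain ⟨k, hk⟩ : ∃ k, Nat.find hex = k + 1 :=
    Nat.exists_eq_succ_of_ne_zero fun h => by simpa [h, hx0] using Nat.find_spec hex
  exact ⟨k, by have := Nat.find_min' hex hv; omega,
    not_lt.mp (Nat.find_min hex (by omega)), hk ▸ Nat.find_spec hex⟩

lemma filter_Icc_eq_Icc_card {P : ℕ → Prop} [DecidablePred P] {b : ℕ}
    (hP : ∀ i j, 1 ≤ i → i ≤ j → j ≤ b → P j → P i) :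
    {i ∈ Icc 1 b | P i} = Icc 1 #{i ∈ Icc 1 b | P i} := by
  induction b with
  | zero => simp
  | succ b ih =>
    have hIcc : Icc 1 (b + 1) = insert (b + 1) (Icc 1 b) := by ext; simp; omega
    rw [hIcc, filter_insert]
    by_cases hb : P (b + 1)
    · have hall : {i ∈ Icc 1 b | P i} = Icc 1 b :=
        filter_true_of_mem fun i hi => hP i (b + 1) (mem_Icc.mp hi).1 (by grind) le_rfl hb
      simp [hb, hall, hIcc]
    · simp only [hb, if_false]
      exact ih fun i j hi hij hj => hP i j hi hij (by omega)

lemma transp_le (b : ℕ) (t : ℕ → ℕ) (k : ℕ) : transp b t k ≤ b :=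
  (card_filter_le _ _).trans (by simp)

lemma filter_Icc_le_eq_Icc_transp {b : ℕ} {t : ℕ → ℕ}
    (ht : ∀ i j, 1 ≤ i → i ≤ j → j ≤ b → t j ≤ t i) (k : ℕ) :
    {i ∈ Icc 1 b | k ≤ t i} = Icc 1 (transp b t k) :=
  filter_Icc_eq_Icc_card fun i j hi hij hj hk => hk.trans (ht i j hi hij hj)

lemma card_filter_Icc_min {b : ℕ} {t : ℕ → ℕ}
    (ht : ∀ i j, 1 ≤ i → i ≤ j → j ≤ b → t j ≤ t i) (L k : ℕ) :
    #{i ∈ Icc 1 (min L b) | k ≤ t i} = min L (transp b t k) := by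
  have hle := transp_le b t k
  have hfilter := filter_Icc_le_eq_Icc_transp ht k
  suffices {i ∈ Icc 1 (min L b) | k ≤ t i} = Icc 1 (min L (transp b t k)) by simp [this]
  ext i
  have hi := Finset.ext_iff.mp hfilter i
  simp only [Finset.mem_filter, mem_Icc] at hi ⊢
  grind

lemma sum_min_transp {b : ℕ} {t : ℕ → ℕ}
    (ht : ∀ i j, 1 ≤ i → i ≤ j → j ≤ b → t j ≤ t i) (L : ℕ) :
    ∑ k ∈ range (t 1), min L (transp b t (k + 1)) = psum t (min L b) := by
  simp_rw [← card_filter_Icc_min ht, card_filter]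
  rw [sum_comm]
  refine sum_congr rfl fun i hi => ?_
  rw [mem_Icc] at hi
  have hti : t i ≤ t 1 := ht 1 i le_rfl hi.1 (by omega)
  rw [← card_filter, show {k ∈ range (t 1) | k + 1 ≤ t i} = range (t i) by ext; simp; omega]
  simp

lemma psum_transp {b : ℕ} {t : ℕ → ℕ} (ht : ∀ i j, 1 ≤ i → i ≤ j → j ≤ b → t j ≤ t i) :
    psum (transp b t) (t 1) = psum t b := by
  simpa [psum_eq_sum_range, min_eq_right (transp_le b t _)] using sum_min_transp ht b

def inversions {n : ℕ} (w : Perm (Fin n)) : Finset (Fin n × Fin n) :=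
  univ.filter fun p => p.1 < p.2 ∧ w p.2 < w p.1

lemma mem_inversions {n : ℕ} {w : Perm (Fin n)} {p : Fin n × Fin n} :
    p ∈ inversions w ↔ p.1 < p.2 ∧ w p.2 < w p.1 := by
  simp [inversions]

lemma lenInv_swap_mul_lt {n : ℕ} (w : Perm (Fin n)) {x y : Fin n} (hxy : (y : ℕ) = x + 1)
    (h : w.symm y < w.symm x) : lenInv (swap x y * w) < lenInv w := by
  have hq : (w.symm y, w.symm x) ∈ inversions w := by
    rw [mem_inversions, apply_symm_apply, apply_symm_apply]
    exact ⟨h, Fin.lt_def.mpr (by omega)⟩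
  have hsub : inversions (swap x y * w) ⊆ (inversions w).erase (w.symm y, w.symm x) := by
    intro p
    simp only [mem_erase, mem_inversions, ne_eq, Prod.ext_iff, eq_symm_apply, Perm.mul_apply,
      swap_apply_def]
    rintro ⟨hlt, hinv⟩
    have h' : ¬ (w p.1 = x ∧ w p.2 = y) := by
      rintro ⟨h₁, h₂⟩
      rw [← h₁, ← h₂, symm_apply_apply, symm_apply_apply] at h
      exact lt_asymm h hlt
    simp only [← Fin.val_fin_lt, Fin.ext_iff] at hlt hinv h' ⊢
    split_ifs at hinv <;> omega
  exact card_lt_card (hsub.trans_ssubset (erase_ssubset hq))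

lemma symm_lt_symm_of_minimal {n : ℕ} {H : Subgroup (Perm (Fin n))} {w : Perm (Fin n)}
    (hmin : ∀ u ∈ H, lenInv w ≤ lenInv (u * w)) {x y : Fin n} (hxy : (y : ℕ) = x + 1)
    (hs : swap x y ∈ H) : w.symm x < w.symm y := by
  have hne : w.symm x ≠ w.symm y := w.symm.injective.ne fun h => by rw [h] at hxy; omega
  exact hne.lt_or_gt.resolve_right fun h => (hmin _ hs).not_gt (lenInv_swap_mul_lt w hxy h)

@[simp]
lemma finOf_val (r : ℕ) (v : Fin (r + 1)) : finOf r v = v :=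
  Fin.ext (min_eq_left (Nat.lt_succ_iff.mp v.isLt))

lemma sr_eq_swap {r i : ℕ} (h₁ : 1 ≤ i) (h₂ : i ≤ r) :
    sr r i = swap (finOf r (i - 1)) (finOf r i) := by
  rw [sr, dif_pos ⟨h₁, h₂⟩]
  congr 1 <;> exact Fin.ext (val_finOf (by omega)).symm

lemma strictMonoOn_symm_of_minimal {r a : ℕ} {c : ℕ → ℕ} {w : Perm (Fin (r + 1))}
    (hc : psum c a = r + 1) (hmin : ∀ u ∈ WP r a c, lenInv w ≤ lenInv (u * w))
    {k : ℕ} (hk : k < a) :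
    StrictMonoOn (fun i => (w.symm (finOf r i) : ℕ)) (Set.Ico (psum c k) (psum c (k + 1))) := by
  refine strictMonoOn_of_lt_succ Set.ordConnected_Ico fun i _ hi hi' => ?_
  simp only [Order.succ_eq_add_one, Set.mem_Ico] at hi hi' ⊢
  have hle : psum c (k + 1) ≤ r + 1 := hc ▸ psum_monotone c hk
  have hs : sr r (i + 1) ∈ WP r a c := Subgroup.subset_closure ⟨i + 1, by omega, by omega,
    fun j _ _ => ((psum_monotone c).ne_of_lt_of_lt_nat k (by omega) (by omega) j).symm, rfl⟩
  rw [sr_eq_swap (by omega) (by omega), Nat.add_sub_cancel] at hs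
  exact symm_lt_symm_of_minimal hmin (by rw [val_finOf, val_finOf] <;> omega) hs

lemma strictAntiOn_of_forall_not_posRoot {r m : ℕ} {p : ℕ → ℕ} {w : Perm (Fin (r + 1))}
    (hp : psum p m = r + 1) (hneg : ∀ i, inDelta r m p i → ¬ posRoot r w i)
    {j : ℕ} (hj : j < m) :
    StrictAntiOn (fun i => (w (finOf r i) : ℕ)) (Set.Ico (psum p j) (psum p (j + 1))) := by
  refine strictAntiOn_of_succ_lt Set.ordConnected_Ico fun i _ hi hi' => ?_
  simp only [Order.succ_eq_add_one, Set.mem_Ico] at hi hi' ⊢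
  have hle : psum p (j + 1) ≤ r + 1 := hp ▸ psum_monotone p hj
  have hΔ : inDelta r m p (i + 1) := ⟨by omega, by omega,
    fun j' _ _ => ((psum_monotone p).ne_of_lt_of_lt_nat j (by omega) (by omega) j').symm⟩
  have hle' := not_lt.mp (hneg _ hΔ)
  rw [Nat.add_sub_cancel] at hle'
  refine hle'.lt_of_ne fun h => ?_
  have := congrArg Fin.val (w.injective (Fin.ext h))
  rw [val_finOf (by omega), val_finOf (by omega)] at this
  omega

lemma eq_of_strictAntiOn_of_strictMonoOn_symm {r : ℕ} {w : Perm (Fin (r + 1))} {P V : Set ℕ}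
    (hP : StrictAntiOn (fun i => (w (finOf r i) : ℕ)) P)
    (hV : StrictMonoOn (fun i => (w.symm (finOf r i) : ℕ)) V) {u v : Fin (r + 1)}
    (hu : (u : ℕ) ∈ P) (hv : (v : ℕ) ∈ P) (hwu : (w u : ℕ) ∈ V) (hwv : (w v : ℕ) ∈ V) :
    u = v := by
  have h₁ := hP.lt_iff_gt hu hv
  have h₂ := hV.lt_iff_lt hwu hwv
  simp only [finOf_val, symm_apply_apply] at h₁ h₂
  exact Fin.ext (by omega)

lemma card_le_sum_min_of_injOn {ι : Type*} {s : Finset ι} {T : Finset ℕ} {L : ℕ} {c : ℕ → ℕ}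
    (β κ : ι → ℕ) (hβ : ∀ u ∈ s, β u < L) (hκ : ∀ u ∈ s, κ u ∈ T)
    (hinj : ∀ u ∈ s, ∀ v ∈ s, β u = β v → κ u = κ v → u = v)
    (hc : ∀ k ∈ T, #{u ∈ s | κ u = k} ≤ c k) :
    #s ≤ ∑ k ∈ T, min L (c k) := by
  classical
  rw [card_eq_sum_card_fiberwise hκ]
  refine sum_le_sum fun k hk => le_min ?_ (hc k hk)
  calc #{u ∈ s | κ u = k} ≤ #(range L) := by
        refine card_le_card_of_injOn β (fun u hu => ?_) fun u hu v hv h => ?_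
        · exact mem_range.mpr (hβ u (Finset.mem_filter.mp hu).1)
        · rw [mem_coe, Finset.mem_filter] at hu hv
          exact hinj u hu.1 v hv.1 h (hu.2.trans hv.2.symm)
    _ = L := card_range L

lemma psum_le_sum_min {r m a : ℕ} {p c : ℕ → ℕ} {w : Perm (Fin (r + 1))}
    (hp : psum p m = r + 1) (hc : psum c a = r + 1)
    (hdec : ∀ j < m,
      StrictAntiOn (fun i => (w (finOf r i) : ℕ)) (Set.Ico (psum p j) (psum p (j + 1))))
    (hinc : ∀ k < a,
      StrictMonoOn (fun i => (w.symm (finOf r i) : ℕ)) (Set.Ico (psum c k) (psum c (k + 1))))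
    {l : ℕ} (hl : l ≤ m) :
    psum p l ≤ ∑ k ∈ range a, min l (c (k + 1)) := by
  choose β hβm hβ using fun u : Fin (r + 1) =>
    exists_mem_block (psum_zero p) (hp.symm ▸ u.isLt : (u : ℕ) < psum p m)
  choose κ hκa hκ using fun v : Fin (r + 1) =>
    exists_mem_block (psum_zero c) (hc.symm ▸ v.isLt : (v : ℕ) < psum c a)
  have hcard : #{u : Fin (r + 1) | (u : ℕ) < psum p l} = psum p l := by
    rw [Fin.card_filter_val_lt, min_eq_right (hp ▸ psum_monotone p hl)]
  rw [← hcard]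
  refine card_le_sum_min_of_injOn β (κ ∘ w) (fun u hu => ?_) (fun u _ => mem_range.mpr (hκa _))
    (fun u _ v _ hβuv hκuv => ?_) fun k _ => ?_
  · exact (psum_monotone p).reflect_lt ((hβ u).1.trans_lt (Finset.mem_filter.mp hu).2)
  · exact eq_of_strictAntiOn_of_strictMonoOn_symm (hdec _ (hβm u)) (hinc _ (hκa (w u))) (hβ u)
      (by rw [hβuv]; exact hβ v) (hκ (w u))
      (by rw [show κ (w u) = κ (w v) from hκuv]; exact hκ (w v))
  · calc #{u ∈ _ | (κ ∘ w) u = k} ≤ #(Ico (psum c k) (psum c (k + 1))) := by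
          refine card_le_card_of_injOn (fun u => (w u : ℕ)) (fun u hu => ?_) ?_
          · rw [mem_coe, Finset.mem_filter, Function.comp_apply] at hu
            exact mem_Ico.mpr (hu.2 ▸ hκ (w u))
          · exact fun u _ v _ h => w.injective (Fin.ext h)
      _ = c (k + 1) := by simp [psum_succ]

theorem stmt16_general (r b m : ℕ) (t p : ℕ → ℕ)
    (htmono : ∀ i j, 1 ≤ i → i ≤ j → j ≤ b → t j ≤ t i)
    (htsum : psum t b = r + 1)
    (hpsum : psum p m = r + 1)
    (l : ℕ) (hl2 : l ≤ m) (hgt : psum t l < psum p l)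
    (w : Equiv.Perm (Fin (r + 1)))
    (hmin : ∀ u ∈ WP r (t 1) (transp b t), lenInv w ≤ lenInv (u * w)) :
    ∃ i, inDelta r m p i ∧ posRoot r w i := by
  by_contra! hneg
  have hx : psum (transp b t) (t 1) = r + 1 := (psum_transp htmono).trans htsum
  have hcount := psum_le_sum_min hpsum hx
    (fun j hj => strictAntiOn_of_forall_not_posRoot hpsum hneg hj)
    (fun k hk => strictMonoOn_symm_of_minimal hx hmin hk) hl2
  rw [sum_min_transp htmono] at hcount
  have := psum_monotone t (min_le_left l b)
  omega

/-- Theorem 3.1(1): if `p_1 + ⋯ + p_l > t_1 + ⋯ + t_l` for some `l`,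
then every minimal-length coset representative `w` of `W(P_{μ^⊤})\W(G)` sends some
`α ∈ Δ_λ` to a positive root. -/
theorem stmt16 (r b m : ℕ) (hr : 1 ≤ r) (hb : 1 ≤ b) (hm : 1 ≤ m) (t p : ℕ → ℕ)
    (htpos : ∀ i, 1 ≤ i → i ≤ b → 1 ≤ t i)
    (htmono : ∀ i j, 1 ≤ i → i ≤ j → j ≤ b → t j ≤ t i)
    (htzero : ∀ i, b < i → t i = 0)
    (htsum : psum t b = r + 1)
    (hppos : ∀ j, 1 ≤ j → j ≤ m → 1 ≤ p j)
    (hpsum : psum p m = r + 1)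
    (l : ℕ) (hl1 : 1 ≤ l) (hl2 : l ≤ m) (hgt : psum t l < psum p l)
    (w : Equiv.Perm (Fin (r + 1)))
    (hmin : ∀ u ∈ WP r (t 1) (transp b t), lenInv w ≤ lenInv (u * w)) :
    ∃ i, inDelta r m p i ∧ posRoot r w i :=
  stmt16_general r b m t p htmono htsum hpsum l hl2 hgt w hmin
end
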